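/- arXiv:1409.5645 — 5 statements merged into one kernel-verified Lean document; each statement's English description precedes it below -/
import Mathlib

section
/- With the definitions in the context, the pointwise identity e⁺ − Λ₊λ₊ n⁺ + (λ₋/2) n⁻ = (w/c_s²)·[ (1 + (1/2)∂_c + Λ ∂_c²) P − Λ₊ (1 + (1/2)∂_c) ∂_c j_c ] holds on ℝ³. (This is the macroscopic form of the expanded Körner free-surface closure relation.) -/
/-! Once `∂_c` is known to commute with `f - a g` (all fields are smooth), the identity is pure
algebra: the prefactors `Λ₊λ₊ · (1/λ₊)` and `(λ₋/2) · (1/λ₋)` collapse to `Λ₊` and `1/2`, and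
`Λ₊Λ₋ ∂_c² P` appears from the `Λ₋ ∂_c P` correction inside `n⁺`. -/

open Matrix

section DirectionalDerivative

variable {E : Type*} [NormedAddCommGroup E] [NormedSpace ℝ E]

theorem fderiv_apply_sub_const_mul {f g : E → ℝ} {x : E} (hf : DifferentiableAt ℝ f x)
    (hg : DifferentiableAt ℝ g x) (a : ℝ) (v : E) :
    fderiv ℝ (fun y => f y - a * g y) x v = fderiv ℝ f x v - a * fderiv ℝ g x v := by
  rw [fderiv_fun_sub hf (hg.const_mul a), fderiv_const_mul hg a]
  simp

theorem ContDiff.fderiv_apply_const {f : E → ℝ} (hf : ContDiff ℝ (⊤ : ℕ∞) f) (v : E) :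
    ContDiff ℝ (⊤ : ℕ∞) (fun x => fderiv ℝ f x v) :=
  (hf.fderiv_right le_rfl).clm_apply contDiff_const

theorem ContDiff.dotProduct_const_left {ι : Type*} [Fintype ι] {n : WithTop ℕ∞} {j : E → ι → ℝ}
    (hj : ContDiff ℝ n j) (c : ι → ℝ) : ContDiff ℝ n (fun x => c ⬝ᵥ j x) := by
  simp only [dotProduct]
  exact ContDiff.sum fun i _ => contDiff_const.mul (contDiff_pi.mp hj i)

end DirectionalDerivative

theorem korner_closure_algebra {lp lm : ℝ} (hlp : lp ≠ 0) (hlm : lm ≠ 0)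
    (Lp Lm k p dp ddp dj ddj : ℝ) :
    k * p - Lp * lp * ((1/lp) * k * (dj - Lm * ddp)) + (lm/2) * ((1/lm) * k * (dp - Lp * ddj)) =
      k * ((p + (1/2) * dp + Lp * Lm * ddp) - Lp * (dj + (1/2) * ddj)) := by
  field_simp
  ring

theorem stmt_2_general (lp lm : ℝ) (hlp : lp ∈ Set.Ioo (-2 : ℝ) 0) (hlm : lm ∈ Set.Ioo (-2 : ℝ) 0)
    (Lp Lm L : ℝ) (hL : L = Lp * Lm)
    (c : Fin 3 → ℝ) (w : ℝ) (cs2 : ℝ)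
    (P : (Fin 3 → ℝ) → ℝ) (j : (Fin 3 → ℝ) → (Fin 3 → ℝ))
    (hP : ContDiff ℝ (⊤ : ℕ∞) P) (hj : ContDiff ℝ (⊤ : ℕ∞) j)
    (jc : (Fin 3 → ℝ) → ℝ) (hjc : jc = fun x => c ⬝ᵥ j x)
    (Dc : ((Fin 3 → ℝ) → ℝ) → ((Fin 3 → ℝ) → ℝ))
    (hDc : Dc = fun f x => fderiv ℝ f x c)
    (ep np nm : (Fin 3 → ℝ) → ℝ)
    (hep : ep = fun x => (w / cs2) * P x)
    (hnp : np = fun x => (1/lp) * (w/cs2) * Dc (fun y => jc y - Lm * Dc P y) x)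
    (hnm : nm = fun x => (1/lm) * (w/cs2) * Dc (fun y => P y - Lp * Dc jc y) x) :
    ∀ x, ep x - Lp * lp * np x + (lm/2) * nm x =
      (w/cs2) * ((P x + (1/2) * Dc P x + L * Dc (Dc P) x)
        - Lp * (Dc jc x + (1/2) * Dc (Dc jc) x)) := by
  intro x
  have hjc_smooth : ContDiff ℝ (⊤ : ℕ∞) jc := hjc ▸ hj.dotProduct_const_left c
  have hdiff {f : (Fin 3 → ℝ) → ℝ} (hf : ContDiff ℝ (⊤ : ℕ∞) f) : DifferentiableAt ℝ f x :=
    hf.differentiable (by simp) x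
  subst hep hnp hnm hL hDc
  beta_reduce
  rw [fderiv_apply_sub_const_mul (hdiff hjc_smooth) (hdiff (hP.fderiv_apply_const c)),
    fderiv_apply_sub_const_mul (hdiff hP) (hdiff (hjc_smooth.fderiv_apply_const c))]
  exact korner_closure_algebra hlp.2.ne hlm.2.ne _ _ _ _ _ _ _ _

/-- The macroscopic form of the expanded Körner free-surface closure:
`e⁺ − Λ₊λ₊ n⁺ + (λ₋/2) n⁻ = (w/c_s²)[(1 + (1/2)∂_c + Λ∂_c²)P − Λ₊(1 + (1/2)∂_c)∂_c j_c]`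
pointwise on ℝ³. -/
theorem stmt_2 (lp lm : ℝ) (hlp : lp ∈ Set.Ioo (-2 : ℝ) 0) (hlm : lm ∈ Set.Ioo (-2 : ℝ) 0)
    (Lp Lm L : ℝ) (hLp : Lp = -(1/2 + 1/lp)) (hLm : Lm = -(1/2 + 1/lm)) (hL : L = Lp * Lm)
    (c : Fin 3 → ℝ) (w : ℝ) (hw : 0 < w) (cs2 : ℝ) (hcs2 : cs2 = 1/3)
    (P : (Fin 3 → ℝ) → ℝ) (j : (Fin 3 → ℝ) → (Fin 3 → ℝ))
    (hP : ContDiff ℝ (⊤ : ℕ∞) P) (hj : ContDiff ℝ (⊤ : ℕ∞) j)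
    (jc : (Fin 3 → ℝ) → ℝ) (hjc : jc = fun x => c ⬝ᵥ j x)
    (Dc : ((Fin 3 → ℝ) → ℝ) → ((Fin 3 → ℝ) → ℝ))
    (hDc : Dc = fun f x => fderiv ℝ f x c)
    (ep em np nm : (Fin 3 → ℝ) → ℝ)
    (hep : ep = fun x => (w / cs2) * P x)
    (hem : em = fun x => (w / cs2) * jc x)
    (hnp : np = fun x => (1/lp) * (w/cs2) * Dc (fun y => jc y - Lm * Dc P y) x)
    (hnm : nm = fun x => (1/lm) * (w/cs2) * Dc (fun y => P y - Lp * Dc jc y) x) :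
    ∀ x, ep x - Lp * lp * np x + (lm/2) * nm x =
      (w/cs2) * ((P x + (1/2) * Dc P x + L * Dc (Dc P) x)
        - Lp * (Dc jc x + (1/2) * Dc (Dc jc) x)) :=
  stmt_2_general lp lm hlp hlm Lp Lm L hL c w cs2 P j hP hj jc hjc Dc hDc ep np nm hep hnp hnm
end

section
/- Let P : ℝ³ → ℝ be three times continuously differentiable, c ∈ ℝ³, x ∈ ℝ³, δ ∈ [0,1] and Λ ∈ ℝ, and let ∂_c denote the directional derivative along c. Then, as ε → 0⁺, P(x) + (ε/2) ∂_c P(x) + Λ ε² ∂_c² P(x) − P(x + δ ε c) = (1/2 − δ) ε ∂_c P(x) + (Λ − δ²/2) ε² ∂_c² P(x) + O(ε³). In particular the left-hand side is O(ε) in general, O(ε²) when δ = 1/2, and O(ε³) when δ = 1/2 and Λ = 1/8. (This quantifies that the Körner free-surface rule imposes the pressure boundary value only to first order unless the boundary intersects the lattice link at δ = 1/2.) -/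
/-!
Along the link, `g t = P (x + t • c)` has `g' 0 = ∂_c P(x)` and `g'' 0 = ∂_c² P(x)`, so
`P (x + δ ε c) = P x + δ ε ∂_c P + (δ ε)² / 2 ∂_c² P + O(ε³)`: the second-order Taylor
remainder of `g` is its cubic Taylor term plus `o(t³)`. Substituting this into the Körner closure and
collecting powers of `ε` gives the expansion; the three special cases are the vanishing of its
lower-order coefficients.
-/

open Filter Asymptotics Topology Set
open scoped Nat

theorem taylor_isBigO_univ {E : Type*} [NormedAddCommGroup E] [NormedSpace ℝ E]
    {f : ℝ → E} {x₀ : ℝ} {n : ℕ} (hf : ContDiff ℝ (n + 1) f) :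
    (fun x ↦ f x - taylorWithinEval f n univ x₀ x) =O[𝓝 x₀] fun x ↦ (x - x₀) ^ (n + 1) := by
  have hnext : (fun x ↦ (((n + 1 : ℝ) * n !)⁻¹ * (x - x₀) ^ (n + 1)) •
      iteratedDerivWithin (n + 1) f univ x₀) =O[𝓝 x₀] fun x ↦ (x - x₀) ^ (n + 1) :=
    (((isBigO_refl _ _).const_mul_left _).smul (isBigO_const_one ℝ _ _)).congr_right
      fun x ↦ by simp
  have hlittle := taylor_isLittleO_univ (x₀ := x₀) (n := n + 1) (by exact_mod_cast hf)
  refine (hlittle.isBigO.add hnext).congr_left fun x ↦ ?_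
  rw [taylorWithinEval_succ]
  abel

theorem taylorWithinEval_two_comp_add_smul {E F : Type*} [NormedAddCommGroup E] [NormedSpace ℝ E]
    [NormedAddCommGroup F] [NormedSpace ℝ F] {f : E → F} (hf : ContDiff ℝ 2 f) (x v : E) (t : ℝ) :
    taylorWithinEval (fun s : ℝ ↦ f (x + s • v)) 2 univ 0 t =
      f x + t • fderiv ℝ f x v + (t ^ 2 / 2) • fderiv ℝ (fun y ↦ fderiv ℝ f y v) x v := by
  have hQ : Differentiable ℝ (fun y ↦ fderiv ℝ f y v) :=
    ((hf.fderiv_right (m := 1) le_rfl).clm_apply contDiff_const).differentiable one_ne_zero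
  have hderiv : deriv (fun s : ℝ ↦ f (x + s • v)) = fun s ↦ fderiv ℝ f (x + s • v) v :=
    funext fun s ↦ (hf.differentiable two_ne_zero _).deriv_comp_add_smul
  simp only [taylor_within_apply, Finset.sum_range_succ, Finset.sum_range_zero,
    iteratedDerivWithin_univ, iteratedDeriv_succ, iteratedDeriv_zero, hderiv,
    (hQ _).deriv_comp_add_smul]
  simp only [Nat.factorial_zero, Nat.cast_one, inv_one, sub_zero, pow_zero, mul_one, zero_smul,
    add_zero, one_smul, zero_add, Nat.factorial_one, pow_one, one_mul, Nat.factorial_two,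
    Nat.cast_ofNat, add_right_inj]
  module

theorem ContDiff.isBigO_sub_taylor_two_comp_add_smul {E F : Type*} [NormedAddCommGroup E]
    [NormedSpace ℝ E] [NormedAddCommGroup F] [NormedSpace ℝ F] {f : E → F} (hf : ContDiff ℝ 3 f)
    (x v : E) :
    (fun t : ℝ ↦ f (x + t • v) -
        (f x + t • fderiv ℝ f x v + (t ^ 2 / 2) • fderiv ℝ (fun y ↦ fderiv ℝ f y v) x v))
      =O[𝓝 0] fun t ↦ t ^ 3 := by
  have hline : ContDiff ℝ (2 + 1) fun t : ℝ ↦ f (x + t • v) :=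
    hf.comp (contDiff_const.add (contDiff_id.smul contDiff_const))
  simpa only [taylorWithinEval_two_comp_add_smul (hf.of_le (by norm_num)), sub_zero] using
    taylor_isBigO_univ (x₀ := 0) hline

theorem isBigO_pow_pow_nhds_zero {m n : ℕ} (h : m ≤ n) :
    (fun x : ℝ ↦ x ^ n) =O[𝓝 0] fun x ↦ x ^ m := by
  rcases h.eq_or_lt with rfl | hlt
  · exact isBigO_refl _ _
  · exact (isLittleO_pow_pow hlt).isBigO

theorem isBigO_of_isBigO_cube_sub_quadratic {f : ℝ → ℝ} {a b : ℝ}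
    (h : (fun ε ↦ f ε - (a * ε + b * ε ^ 2)) =O[𝓝 0] fun ε ↦ ε ^ 3) :
    (f =O[𝓝 0] fun ε ↦ ε) ∧ (a = 0 → f =O[𝓝 0] fun ε ↦ ε ^ 2) ∧
      (a = 0 → b = 0 → f =O[𝓝 0] fun ε ↦ ε ^ 3) := by
  have hsplit : f = fun ε ↦ (f ε - (a * ε + b * ε ^ 2)) + (a * ε + b * ε ^ 2) := by simp
  have hlin : ∀ {n : ℕ}, 1 ≤ n → (fun ε : ℝ ↦ ε ^ n) =O[𝓝 0] fun ε ↦ ε := fun hn ↦ by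
    simpa using isBigO_pow_pow_nhds_zero hn
  refine ⟨?_, fun ha ↦ ?_, fun ha hb ↦ ?_⟩
  · rw [hsplit]
    exact (h.trans (hlin (by norm_num))).add
      (((isBigO_refl _ _).const_mul_left a).add ((hlin one_le_two).const_mul_left b))
  · subst ha
    rw [hsplit]
    simpa only [zero_mul, zero_add] using
      (h.trans (isBigO_pow_pow_nhds_zero (by norm_num))).add ((isBigO_refl _ _).const_mul_left b)
  · subst ha hb
    simpa using h

theorem stmt_3_general (P : (Fin 3 → ℝ) → ℝ) (hP : ContDiff ℝ 3 P)
    (c x : Fin 3 → ℝ) (δ : ℝ) (Λ : ℝ)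
    (D1 D2 : ℝ) (hD1 : D1 = fderiv ℝ P x c)
    (hD2 : D2 = fderiv ℝ (fun y => fderiv ℝ P y c) x c)
    (F : ℝ → ℝ)
    (hF : F = fun ε => P x + (ε/2) * D1 + Λ * ε^2 * D2 - P (x + (δ * ε) • c)) :
    ((fun ε => F ε - ((1/2 - δ) * ε * D1 + (Λ - δ^2/2) * ε^2 * D2))
        =O[𝓝[>] (0:ℝ)] fun ε => ε^3) ∧
    (F =O[𝓝[>] (0:ℝ)] fun ε => ε) ∧
    (δ = 1/2 → F =O[𝓝[>] (0:ℝ)] fun ε => ε^2) ∧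
    (δ = 1/2 → Λ = 1/8 → F =O[𝓝[>] (0:ℝ)] fun ε => ε^3) := by
  have hscale : Tendsto (fun ε : ℝ ↦ δ * ε) (𝓝 0) (𝓝 0) :=
    (continuous_const_mul δ).tendsto' 0 0 (mul_zero δ)
  have hcube : (fun ε : ℝ ↦ (δ * ε) ^ 3) =O[𝓝 0] fun ε ↦ ε ^ 3 :=
    ((isBigO_refl _ _).const_mul_left (δ ^ 3)).congr_left fun ε ↦ (mul_pow δ ε 3).symm
  have hrem : (fun ε ↦ F ε - ((1/2 - δ) * D1 * ε + (Λ - δ^2/2) * D2 * ε ^ 2))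
      =O[𝓝 0] fun ε ↦ ε ^ 3 := by
    refine (((hP.isBigO_sub_taylor_two_comp_add_smul x c).comp_tendsto hscale).neg_left.trans
      hcube).congr_left fun ε ↦ ?_
    simp only [Function.comp_apply, smul_eq_mul, hF, hD1, hD2]
    ring
  obtain ⟨hlin, hsq, hcub⟩ := isBigO_of_isBigO_cube_sub_quadratic hrem
  refine ⟨(hrem.congr_left fun ε ↦ by ring).mono nhdsWithin_le_nhds,
    hlin.mono nhdsWithin_le_nhds, fun hδ ↦ ?_, fun hδ hΛ ↦ ?_⟩
  · exact (hsq (by rw [hδ]; norm_num)).mono nhdsWithin_le_nhds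
  · exact (hcub (by rw [hδ]; norm_num) (by rw [hδ, hΛ]; norm_num)).mono nhdsWithin_le_nhds

/-- For `P : ℝ³ → ℝ` of class `C³`, `δ ∈ [0,1]`, `Λ ∈ ℝ`, as `ε → 0⁺`:
`P(x) + (ε/2)∂_cP(x) + Λε²∂_c²P(x) − P(x + δεc)
  = (1/2 − δ)ε ∂_cP(x) + (Λ − δ²/2)ε² ∂_c²P(x) + O(ε³)`.
In particular the left-hand side is `O(ε)` in general, `O(ε²)` when `δ = 1/2`, and
`O(ε³)` when `δ = 1/2` and `Λ = 1/8`. -/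
theorem stmt_3 (P : (Fin 3 → ℝ) → ℝ) (hP : ContDiff ℝ 3 P)
    (c x : Fin 3 → ℝ) (δ : ℝ) (hδ : δ ∈ Set.Icc (0 : ℝ) 1) (Λ : ℝ)
    (D1 D2 : ℝ) (hD1 : D1 = fderiv ℝ P x c)
    (hD2 : D2 = fderiv ℝ (fun y => fderiv ℝ P y c) x c)
    (F : ℝ → ℝ)
    (hF : F = fun ε => P x + (ε/2) * D1 + Λ * ε^2 * D2 - P (x + (δ * ε) • c)) :
    ((fun ε => F ε - ((1/2 - δ) * ε * D1 + (Λ - δ^2/2) * ε^2 * D2))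
        =O[𝓝[>] (0:ℝ)] fun ε => ε^3) ∧
    (F =O[𝓝[>] (0:ℝ)] fun ε => ε) ∧
    (δ = 1/2 → F =O[𝓝[>] (0:ℝ)] fun ε => ε^2) ∧
    (δ = 1/2 → Λ = 1/8 → F =O[𝓝[>] (0:ℝ)] fun ε => ε^3) :=
  stmt_3_general P hP c x δ Λ D1 D2 hD1 hD2 F hF
end

section
/- Let λ₊, λ₋ ∈ (−2, 0), α₊ ∈ ℝ, δ ∈ [0,1], and set Λ₊ = −(1/2 + 1/λ₊). Define a₀ = 1 − α₊(1/2 + δ), ā₀ = 1 − α₊/2, a₁ = δα₊ − 1, and C = α₊λ₊(1/2 + δ) − 2λ₊. Then the derived coefficients α₊' = 1 − a₀ − ā₀ − a₁, β₊ = 1 − (1 + λ₊)(a₀ + ā₀) − a₁ − C, α₋ = ā₀ − a₀ − a₁ − 1, and β₋ = (1 + λ₋)ā₀ − (1 + λ₋)a₀ − a₁ − 1 satisfy the matching conditions α₊' = α₊, α₋ = 0, β₋ = α₊ δ λ₋, and β₊ = −α₊ Λ₊ λ₊. -/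
theorem stmt_4_general (lp lm : ℝ) (hlp : lp ∈ Set.Ioo (-2 : ℝ) 0)
    (αp δ : ℝ)
    (Lp : ℝ) (hLp : Lp = -(1/2 + 1/lp))
    (a₀ abar₀ a₁ C : ℝ)
    (ha₀ : a₀ = 1 - αp * (1/2 + δ))
    (habar₀ : abar₀ = 1 - αp / 2)
    (ha₁ : a₁ = δ * αp - 1)
    (hC : C = αp * lp * (1/2 + δ) - 2 * lp)
    (αp' βp αm βm : ℝ)
    (hαp' : αp' = 1 - a₀ - abar₀ - a₁)
    (hβp : βp = 1 - (1 + lp) * (a₀ + abar₀) - a₁ - C)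
    (hαm : αm = abar₀ - a₀ - a₁ - 1)
    (hβm : βm = (1 + lm) * abar₀ - (1 + lm) * a₀ - a₁ - 1) :
    αp' = αp ∧ αm = 0 ∧ βm = αp * δ * lm ∧ βp = -αp * Lp * lp := by
  have hlp₀ : lp ≠ 0 := hlp.2.ne
  subst hLp ha₀ habar₀ ha₁ hC hαp' hβp hαm hβm
  refine ⟨by ring, by ring, by ring, ?_⟩
  field_simp
  ring

/-- The FSL closure coefficients `a₀ = 1 − α₊(1/2 + δ)`, `abar₀ = 1 − α₊/2`,
`a₁ = δα₊ − 1`, `C = α₊λ₊(1/2 + δ) − 2λ₊` satisfy the second-order matching conditions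
`α₊' = α₊`, `α₋ = 0`, `β₋ = α₊δλ₋`, `β₊ = −α₊Λ₊λ₊`. -/
theorem stmt_4 (lp lm : ℝ) (hlp : lp ∈ Set.Ioo (-2 : ℝ) 0) (hlm : lm ∈ Set.Ioo (-2 : ℝ) 0)
    (αp δ : ℝ) (hδ : δ ∈ Set.Icc (0 : ℝ) 1)
    (Lp : ℝ) (hLp : Lp = -(1/2 + 1/lp))
    (a₀ abar₀ a₁ C : ℝ)
    (ha₀ : a₀ = 1 - αp * (1/2 + δ))
    (habar₀ : abar₀ = 1 - αp / 2)
    (ha₁ : a₁ = δ * αp - 1)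
    (hC : C = αp * lp * (1/2 + δ) - 2 * lp)
    (αp' βp αm βm : ℝ)
    (hαp' : αp' = 1 - a₀ - abar₀ - a₁)
    (hβp : βp = 1 - (1 + lp) * (a₀ + abar₀) - a₁ - C)
    (hαm : αm = abar₀ - a₀ - a₁ - 1)
    (hβm : βm = (1 + lm) * abar₀ - (1 + lm) * a₀ - a₁ - 1) :
    αp' = αp ∧ αm = 0 ∧ βm = αp * δ * lm ∧ βp = -αp * Lp * lp :=
  stmt_4_general lp lm hlp αp δ Lp hLp a₀ abar₀ a₁ C ha₀ habar₀ ha₁ hC αp' βp αm βm hαp' hβp hαm hβm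
end

section
/- With u as defined in the context: for every t > 0 the partial derivative ∂_z u(0, t) exists and equals 0; that is, the series solution satisfies the shear-free (free-surface) condition at z = 0 exactly. -/
open Real

/-!
Each term of the series is a multiple of `cos ((2k+1) π z / (2h))`, whose `z`-derivative vanishes
at `z = 0`. For `t > 0` the factors `exp (-(2k+1)² π² ν t / (4h²))` make the series of
`z`-derivatives uniformly summable, so the series may be differentiated term by term.
-/

theorem hasDerivAt_tsum_mul_cos_zero {a m : ℕ → ℝ} (ha : Summable a)
    (ham : Summable fun k => a k * m k) :
    HasDerivAt (fun z => ∑' k, a k * cos (m k * z)) 0 0 := by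
  have hterm (k : ℕ) (z : ℝ) :
      HasDerivAt (fun z => a k * cos (m k * z)) (a k * (-sin (m k * z) * m k)) z := by
    have := (hasDerivAt_id z).const_mul (m k)
    simp only [id, mul_one] at this
    exact ((hasDerivAt_cos _).comp z this).const_mul (a k)
  have hbound (k : ℕ) (z : ℝ) : ‖a k * (-sin (m k * z) * m k)‖ ≤ ‖a k * m k‖ := by
    rw [show a k * (-sin (m k * z) * m k) = -(a k * m k * sin (m k * z)) by ring, norm_neg,
      norm_mul]
    exact mul_le_of_le_one_right (norm_nonneg _) (abs_sin_le_one _)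
  simpa using hasDerivAt_tsum (y₀ := 0) ham.norm hterm hbound (by simpa using ha) 0

theorem summable_exp_neg_mul_odd_sq {b : ℝ} (hb : 0 < b) :
    Summable fun k : ℕ => exp (-b * (2 * k + 1) ^ 2) :=
  summable_exp_nat_mul_of_ge (neg_neg_of_pos hb) fun k => by nlinarith

theorem norm_four_mul_neg_one_pow_div_odd_mul_pi_le (k : ℕ) :
    ‖4 * (-1 : ℝ) ^ k / ((2 * k + 1) * π)‖ ≤ 4 / π := by
  have hk : π ≤ (2 * k + 1) * π :=
    le_mul_of_one_le_left pi_pos.le (le_add_of_nonneg_left (by positivity))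
  rw [norm_div, norm_mul, norm_pow, norm_neg, norm_one, one_pow, mul_one,
    Real.norm_of_nonneg (by positivity), Real.norm_of_nonneg (by positivity)]
  gcongr

/-- The series solution `u` satisfies the shear-free (free-surface)
condition at `z = 0` exactly: for every `t > 0`, `∂_z u(0,t)` exists and equals `0`. -/
theorem stmt_10 (u_wall h ν : ℝ) (hh : 0 < h) (hν : 0 < ν)
    (u : ℝ → ℝ → ℝ)
    (hu : ∀ z t, u z t = u_wall *
      (1 - ∑' k : ℕ, 4 * (-1 : ℝ)^k / ((2 * k + 1) * π)
          * Real.exp (-(2 * k + 1)^2 * π^2 * ν * t / (4 * h^2))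
          * Real.cos ((2 * k + 1) * π * z / (2 * h)))) :
    ∀ t : ℝ, 0 < t → HasDerivAt (fun z => u z t) 0 0 := by
  intro t ht
  set E : ℕ → ℝ := fun k => exp (-(2 * k + 1) ^ 2 * π ^ 2 * ν * t / (4 * h ^ 2))
  have hE : Summable E := by
    convert summable_exp_neg_mul_odd_sq (b := π ^ 2 * ν * t / (4 * h ^ 2)) (by positivity)
      using 3
    ring
  set a : ℕ → ℝ := fun k => 4 * (-1) ^ k / ((2 * k + 1) * π) * E k with ha_def
  set m : ℕ → ℝ := fun k => (2 * k + 1) * π / (2 * h) with hm_def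
  have ha : Summable a := (hE.mul_left (4 / π)).of_norm_bounded fun k => by
    rw [norm_mul, Real.norm_of_nonneg (exp_pos _).le]
    exact mul_le_mul_of_nonneg_right (norm_four_mul_neg_one_pow_div_odd_mul_pi_le k)
      (exp_pos _).le
  have ham : Summable fun k => a k * m k := by
    refine (hE.mul_left (2 / h)).of_norm_bounded fun k => ?_
    have hk : (2 * k + 1 : ℝ) ≠ 0 := by positivity
    have hprod : a k * m k = (-1) ^ k * (2 / h * E k) := by
      simp only [ha_def, hm_def]
      field_simp
      ring
    rw [hprod, norm_mul, norm_pow, norm_neg, norm_one, one_pow, one_mul,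
      Real.norm_of_nonneg (by positivity)]
  have hseries : (fun z => u z t) = fun z => u_wall * (1 - ∑' k, a k * cos (m k * z)) := by
    funext z
    rw [hu]
    congr 3 with k
    congr 2
    ring
  rw [hseries]
  simpa using ((hasDerivAt_tsum_mul_cos_zero ha ham).const_sub 1).const_mul u_wall
end

section
/- Let j : ℝ³ → ℝ³ be three times continuously differentiable, c ∈ ℝ³, x ∈ ℝ³, δ ∈ [0,1], Λ₊ ∈ ℝ, write j_c = c·j and let ∂_c denote the directional derivative along c. Then, as ε → 0⁺, Λ₊ ε [ (∂_c j_c)(x) + (ε/2) (∂_c² j_c)(x) ] − Λ₊ ε (∂_c j_c)(x + δ ε c) = Λ₊ (1/2 − δ) ε² (∂_c² j_c)(x) + O(ε³). In particular, the Körner free-surface rule imposes the vanishing-shear condition at the wall point x + δεc to second order (relative to the ε-prefactor) exactly when δ = 1/2, and only to first order otherwise. -/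
/-!
Put `g t = (∂_c j_c)(x + t c)`, so that `g' t = (∂_c² j_c)(x + t c)`. Expanding shows
`G ε - Λ₊ (1/2 - δ) ε² g'(0) = -Λ₊ ε (g(δε) - g(0) - δε g'(0))`, and the bracket is the
first-order Taylor remainder of `g`, which is `O(ε²)` because `g'` is differentiable at `0`.
-/

open Matrix Filter Asymptotics Topology

theorem isBigO_sub_sub_smul_deriv_sq {E : Type*} [NormedAddCommGroup E] [NormedSpace ℝ E]
    {f f' : ℝ → E} {a : ℝ} (hff' : ∀ t, HasDerivAt f (f' t) t) (hf' : DifferentiableAt ℝ f' a) :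
    (fun t => f t - f a - (t - a) • f' a) =O[𝓝 a] fun t => (t - a) ^ 2 := by
  set f'' := deriv f' a
  -- subtracting the full second-order Taylor polynomial leaves a remainder that is `o((t - a)²)`
  set R : ℝ → E := fun t => f t - (t - a) • f' a - ((t - a) ^ 2 / 2) • f''
  have hR : ∀ t, HasDerivAt R (f' t - f' a - (t - a) • f'') t := by
    intro t
    have hlin := ((hasDerivAt_id' t).sub_const a).smul_const (f' a)
    have hquad := (((hasDerivAt_id' t).sub_const a).pow 2).div_const 2 |>.smul_const f''
    refine ((hff' t).sub hlin |>.sub hquad).congr_deriv ?_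
    norm_num
  have hR' : (fun t => f' t - f' a - (t - a) • f'') =o[𝓝 a] fun t => (t - a) ^ 1 := by
    simpa using hasDerivAt_iff_isLittleO.mp hf'.hasDerivAt
  have hRo : (fun t => R t - R a) =o[𝓝 a] fun t => (t - a) ^ 2 := by
    simpa using Convex.isLittleO_pow_succ_real convex_univ (Set.mem_univ a)
      (fun t _ => (hR t).hasDerivWithinAt) (by simpa using hR')
  have hquad : (fun t => ((t - a) ^ 2 / 2) • f'') =O[𝓝 a] fun t => (t - a) ^ 2 :=
    isBigO_of_le' (c := ‖f''‖) _ fun t => by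
      rw [norm_smul, norm_div, Real.norm_two, mul_comm]
      gcongr
      linarith [norm_nonneg ((t - a) ^ 2)]
  refine (hRo.isBigO.add hquad).congr_left fun t => ?_
  simp [R]
  abel

theorem hasDerivAt_comp_add_smul {E F : Type*} [NormedAddCommGroup E] [NormedSpace ℝ E]
    [NormedAddCommGroup F] [NormedSpace ℝ F] {φ : E → F} {x v : E} {t : ℝ}
    (h : DifferentiableAt ℝ φ (x + t • v)) :
    HasDerivAt (fun s : ℝ => φ (x + s • v)) (fderiv ℝ φ (x + t • v) v) t := by
  have hline : HasDerivAt (fun s : ℝ => x + s • v) v t := by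
    simpa using ((hasDerivAt_id t).smul_const v).const_add x
  exact h.hasFDerivAt.comp_hasDerivAt t hline

theorem ContDiff.const_dotProduct {ι E : Type*} [Fintype ι] [NormedAddCommGroup E]
    [NormedSpace ℝ E] {n : WithTop ℕ∞} {f : E → ι → ℝ} (hf : ContDiff ℝ n f) (c : ι → ℝ) :
    ContDiff ℝ n fun y => c ⬝ᵥ f y :=
  ContDiff.sum fun i _ => contDiff_const.mul (contDiff_pi.mp hf i)

theorem Asymptotics.IsBigO.comp_const_mul_sq {E : Type*} [NormedAddCommGroup E] {R : ℝ → E}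
    (h : R =O[𝓝 0] fun t => t ^ 2) (δ : ℝ) : (fun ε => R (δ * ε)) =O[𝓝 0] fun ε => ε ^ 2 := by
  have hδε : Tendsto (fun ε : ℝ => δ * ε) (𝓝 0) (𝓝 0) := by
    simpa using (continuous_const_mul δ).tendsto 0
  refine (h.comp_tendsto hδε).trans ?_
  exact (isBigO_refl _ _).const_mul_left (δ ^ 2) |>.congr_left fun ε => by simp [mul_pow]

theorem stmt_14_general (j : (Fin 3 → ℝ) → (Fin 3 → ℝ)) (hj : ContDiff ℝ 3 j)
    (c x : Fin 3 → ℝ) (δ : ℝ) (Lp : ℝ)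
    (jc : (Fin 3 → ℝ) → ℝ) (hjc : jc = fun y => c ⬝ᵥ j y)
    (D1 D2 : (Fin 3 → ℝ) → ℝ)
    (hD1 : D1 = fun y => fderiv ℝ jc y c)
    (hD2 : D2 = fun y => fderiv ℝ D1 y c)
    (G : ℝ → ℝ)
    (hG : G = fun ε => Lp * ε * (D1 x + (ε/2) * D2 x) - Lp * ε * D1 (x + (δ * ε) • c)) :
    ((fun ε => G ε - Lp * (1/2 - δ) * ε^2 * D2 x) =O[𝓝[>] (0:ℝ)] fun ε => ε^3) ∧
    (G =O[𝓝[>] (0:ℝ)] fun ε => ε^2) ∧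
    (δ = 1/2 → G =O[𝓝[>] (0:ℝ)] fun ε => ε^3) := by
  have hjc3 : ContDiff ℝ 3 jc := hjc ▸ hj.const_dotProduct c
  have hD1c : ContDiff ℝ 2 D1 :=
    hD1 ▸ (hjc3.fderiv_right (m := 2) (by norm_num)).clm_apply contDiff_const
  have hD2c : ContDiff ℝ 1 D2 :=
    hD2 ▸ (hD1c.fderiv_right (m := 1) (by norm_num)).clm_apply contDiff_const
  set g : ℝ → ℝ := fun t => D1 (x + t • c)
  have hg : ∀ t, HasDerivAt g (D2 (x + t • c)) t := fun t =>
    hD2 ▸ hasDerivAt_comp_add_smul (hD1c.differentiable two_ne_zero _)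
  have hg' : DifferentiableAt ℝ (fun t : ℝ => D2 (x + t • c)) 0 :=
    (hD2c.differentiable one_ne_zero _).comp 0 (by fun_prop)
  have hTaylor : (fun ε => g (δ * ε) - g 0 - (δ * ε) * D2 x) =O[𝓝 0] fun ε => ε ^ 2 := by
    have h := isBigO_sub_sub_smul_deriv_sq hg hg'
    simp only [sub_zero, zero_smul, add_zero, smul_eq_mul] at h
    exact h.comp_const_mul_sq δ
  have hremainder : ∀ ε, G ε - Lp * (1/2 - δ) * ε^2 * D2 x
      = (Lp * ε) * -(g (δ * ε) - g 0 - (δ * ε) * D2 x) := fun ε => by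
    simp only [hG, g, zero_smul, add_zero]
    ring
  have hmain : (fun ε => G ε - Lp * (1/2 - δ) * ε^2 * D2 x) =O[𝓝 0] fun ε => ε^3 :=
    (((isBigO_refl _ _).const_mul_left Lp).mul hTaylor.neg_left).congr
      (fun ε => (hremainder ε).symm) (fun ε => by ring)
  have hquad : (fun ε => Lp * (1/2 - δ) * ε^2 * D2 x) =O[𝓝 0] fun ε => ε ^ 2 :=
    (isBigO_refl _ _).const_mul_left (Lp * (1/2 - δ) * D2 x) |>.congr_left fun ε => by ring
  have hG2 : G =O[𝓝 0] fun ε => ε ^ 2 := by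
    simpa using (hmain.trans (isLittleO_pow_pow (by norm_num)).isBigO).add hquad
  refine ⟨hmain.mono nhdsWithin_le_nhds, hG2.mono nhdsWithin_le_nhds, fun hδ => ?_⟩
  simpa [hδ] using hmain.mono nhdsWithin_le_nhds

/-- For `j : ℝ³ → ℝ³` of class `C³`, `j_c = c·j`, `δ ∈ [0,1]`, as `ε → 0⁺`:
`Λ₊ε[(∂_c j_c)(x) + (ε/2)(∂_c² j_c)(x)] − Λ₊ε(∂_c j_c)(x + δεc)
  = Λ₊(1/2 − δ)ε²(∂_c² j_c)(x) + O(ε³)`.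
In particular the Körner rule imposes the vanishing-shear condition at the wall point to
second order relative to the ε-prefactor when `δ = 1/2` (`O(ε³)` total), and to first
order (`O(ε²)` total) in general. -/
theorem stmt_14 (j : (Fin 3 → ℝ) → (Fin 3 → ℝ)) (hj : ContDiff ℝ 3 j)
    (c x : Fin 3 → ℝ) (δ : ℝ) (hδ : δ ∈ Set.Icc (0 : ℝ) 1) (Lp : ℝ)
    (jc : (Fin 3 → ℝ) → ℝ) (hjc : jc = fun y => c ⬝ᵥ j y)
    (D1 D2 : (Fin 3 → ℝ) → ℝ)
    (hD1 : D1 = fun y => fderiv ℝ jc y c)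
    (hD2 : D2 = fun y => fderiv ℝ D1 y c)
    (G : ℝ → ℝ)
    (hG : G = fun ε => Lp * ε * (D1 x + (ε/2) * D2 x) - Lp * ε * D1 (x + (δ * ε) • c)) :
    ((fun ε => G ε - Lp * (1/2 - δ) * ε^2 * D2 x) =O[𝓝[>] (0:ℝ)] fun ε => ε^3) ∧
    (G =O[𝓝[>] (0:ℝ)] fun ε => ε^2) ∧
    (δ = 1/2 → G =O[𝓝[>] (0:ℝ)] fun ε => ε^3) :=
  stmt_14_general j hj c x δ Lp jc hjc D1 D2 hD1 hD2 G hG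
end
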